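/- arXiv:2006.05833 — 4 statements merged into one kernel-verified Lean document; each statement's English description precedes it below -/
import Mathlib

section
/- Let x', x, l_2, ..., l_{τ−1}, x_1, ..., x_κ ∈ {0,1} with τ ≥ 2 and κ ≥ 1. Then the inequalities ((τ−1)κ + 1)·x' − κ·(x + Σ_{i=2}^{τ−1} l_i) − Σ_{i=1}^κ x_i + κ − 1 ≥ 0 and −κ·x' + κ·(x + Σ_{i=2}^{τ−1} l_i) + Σ_{i=1}^κ x_i ≥ 0 hold simultaneously if and only if (x' = 1 ↔ (at least one of x, l_2, ..., l_{τ−1} equals 1, or all of x_1, ..., x_κ equal 1)). -/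
/-!
Put `A = κ * (x + ∑ l_i) + ∑ x_j`, so that `0 ≤ A ≤ τ * κ`. For `0/1` values, `κ ≤ A` holds
exactly when one of `x, l_i` is `1` or all `x_j` are `1`. For `x' = 0` the two inequalities say
`0 ≤ A ≤ κ - 1`, and for `x' = 1` they say `κ ≤ A ≤ τ * κ`.
-/

section ZeroOneSum

variable {ι : Type*} [Fintype ι] {f : ι → ℤ}

lemma sum_nonneg_of_zero_or_one (hf : ∀ i, f i = 0 ∨ f i = 1) : 0 ≤ ∑ i, f i :=
  Finset.sum_nonneg fun i _ => by rcases hf i with h | h <;> simp [h]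

lemma sum_le_card_of_zero_or_one (hf : ∀ i, f i = 0 ∨ f i = 1) :
    ∑ i, f i ≤ Fintype.card ι := by
  simpa using Finset.sum_le_card_nsmul Finset.univ f 1 fun i _ => by
    rcases hf i with h | h <;> simp [h]

lemma one_le_sum_iff_exists_eq_one (hf : ∀ i, f i = 0 ∨ f i = 1) :
    1 ≤ ∑ i, f i ↔ ∃ i, f i = 1 := by
  have hzero : ∑ i, f i = 0 ↔ ∀ i, f i = 0 := by
    simpa using Finset.sum_eq_zero_iff_of_nonneg (s := Finset.univ) fun i _ => by
      rcases hf i with h | h <;> simp [h]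
  have hnonneg := sum_nonneg_of_zero_or_one hf
  constructor
  · intro h
    by_contra! hne
    have : ∑ i, f i = 0 := hzero.2 fun i => (hf i).resolve_right (hne i)
    omega
  · rintro ⟨i, hi⟩
    have : ∑ i, f i ≠ 0 := fun h => by simp [hzero.1 h i] at hi
    omega

lemma card_le_sum_iff_forall_eq_one (hf : ∀ i, f i = 0 ∨ f i = 1) :
    (Fintype.card ι : ℤ) ≤ ∑ i, f i ↔ ∀ i, f i = 1 := by
  -- Count the zeros instead: `∑ (1 - f i)` is a sum of nonnegative terms.
  have hcompl : ∑ i, (1 - f i) = Fintype.card ι - ∑ i, f i := by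
    simp [Finset.sum_sub_distrib]
  have hzero : ∑ i, (1 - f i) = 0 ↔ ∀ i, 1 - f i = 0 := by
    simpa only [Finset.mem_univ, forall_const] using
      Finset.sum_eq_zero_iff_of_nonneg (s := Finset.univ) fun i _ => by
        rcases hf i with h | h <;> simp [h]
  have hle := sum_le_card_of_zero_or_one hf
  constructor
  · intro h i
    have := hzero.1 (by omega) i
    omega
  · intro h
    have := hzero.2 fun i => by simp [h i]
    omega

end ZeroOneSum

lemma one_le_or_le_iff_le_mul_add {κ S T : ℤ} (hκ : 0 ≤ κ) (hS : 0 ≤ S) (hT : 0 ≤ T) :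
    1 ≤ S ∨ κ ≤ T ↔ κ ≤ κ * S + T := by
  constructor
  · rintro (h | h) <;> nlinarith
  · intro h
    rcases (show S = 0 ∨ 1 ≤ S by omega) with rfl | hS1
    · right; simpa using h
    · left; exact hS1

lemma le_and_le_iff_of_bounds {τ κ x' S T : ℤ} {P : Prop} (hx' : x' = 0 ∨ x' = 1)
    (hA : 0 ≤ κ * S + T) (hAτ : κ * S + T ≤ τ * κ) (hP : P ↔ κ ≤ κ * S + T) :
    ((τ - 1) * κ + 1) * x' - κ * S - T + κ - 1 ≥ 0 ∧ -κ * x' + κ * S + T ≥ 0 ↔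
      (x' = 1 ↔ P) := by
  rw [hP]
  rcases hx' with rfl | rfl
  · constructor
    · rintro ⟨h, -⟩; simp only [zero_ne_one, false_iff, not_le]; linarith
    · intro h; constructor <;> linarith [h.not.1 zero_ne_one]
  · simp only [true_iff]
    constructor
    · rintro ⟨-, h⟩; linarith
    · intro h; constructor <;> linarith

theorem stmt_2_general (τ κ : ℕ) (hτ : 2 ≤ τ)
    (x' x : ℤ) (l : Fin (τ - 2) → ℤ) (xs : Fin κ → ℤ)
    (hx' : x' = 0 ∨ x' = 1) (hx : x = 0 ∨ x = 1)
    (hl : ∀ i, l i = 0 ∨ l i = 1) (hxs : ∀ j, xs j = 0 ∨ xs j = 1) :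
    ((((τ : ℤ) - 1) * κ + 1) * x' - (κ : ℤ) * (x + ∑ i, l i) - (∑ j, xs j) + (κ : ℤ) - 1 ≥ 0 ∧
      -(κ : ℤ) * x' + (κ : ℤ) * (x + ∑ i, l i) + ∑ j, xs j ≥ 0) ↔
      (x' = 1 ↔ (x = 1 ∨ (∃ i, l i = 1) ∨ ∀ j, xs j = 1)) := by
  have hL0 := sum_nonneg_of_zero_or_one hl
  have hLτ := sum_le_card_of_zero_or_one hl
  have hT0 := sum_nonneg_of_zero_or_one hxs
  have hTκ := sum_le_card_of_zero_or_one hxs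
  simp only [Fintype.card_fin] at hLτ hTκ
  push_cast [hτ] at hLτ
  have hS : x = 1 ∨ (∃ i, l i = 1) ↔ 1 ≤ x + ∑ i, l i := by
    rw [← one_le_sum_iff_exists_eq_one hl]
    rcases hx with rfl | rfl <;> simp [hL0]
  have hT : (∀ j, xs j = 1) ↔ (κ : ℤ) ≤ ∑ j, xs j := by
    simpa using (card_le_sum_iff_forall_eq_one hxs).symm
  have hS0 : 0 ≤ x + ∑ i, l i := by rcases hx with rfl | rfl <;> linarith
  have hSτ : x + ∑ i, l i ≤ τ - 1 := by rcases hx with rfl | rfl <;> linarith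
  refine le_and_le_iff_of_bounds hx' (by positivity) (by nlinarith) ?_
  rw [← or_assoc, hS, hT]
  exact one_le_or_le_iff_le_mul_add (by positivity) hS0 hT0

theorem stmt_2 (τ κ : ℕ) (hτ : 2 ≤ τ) (hκ : 1 ≤ κ)
    (x' x : ℤ) (l : Fin (τ - 2) → ℤ) (xs : Fin κ → ℤ)
    (hx' : x' = 0 ∨ x' = 1) (hx : x = 0 ∨ x = 1)
    (hl : ∀ i, l i = 0 ∨ l i = 1) (hxs : ∀ j, xs j = 0 ∨ xs j = 1) :
    ((((τ : ℤ) - 1) * κ + 1) * x' - (κ : ℤ) * (x + ∑ i, l i) - (∑ j, xs j) + (κ : ℤ) - 1 ≥ 0 ∧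
      -(κ : ℤ) * x' + (κ : ℤ) * (x + ∑ i, l i) + ∑ j, xs j ≥ 0) ↔
      (x' = 1 ↔ (x = 1 ∨ (∃ i, l i = 1) ∨ ∀ j, xs j = 1)) :=
  stmt_2_general τ κ hτ x' x l xs hx' hx hl hxs
end

section
/- For 0/1 integers x', x, x_1, ..., x_κ (the τ = 2 case of Theorem 3 with no intermediate path variables), the inequalities (κ+1)·x' − κ·x − Σ x_i + κ − 1 ≥ 0 and −κ·x' + κ·x + Σ x_i ≥ 0 hold iff (x' = 1 ↔ (x = 1 or all x_i = 1)). -/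
open Finset

/-
Write S = ∑ xᵢ. Since every xᵢ ∈ {0,1}, we have 0 ≤ S ≤ κ, and all xᵢ equal 1 exactly when S = κ.
With S in place of the individual xᵢ, the statement is linear in S, and checking the four
choices of (x', x) is elementary arithmetic.
-/

section ZeroOneSums

variable {ι R : Type*} [AddCommMonoidWithOne R] [PartialOrder R] [IsOrderedCancelAddMonoid R]

theorem Finset.sum_le_card_of_le_one (s : Finset ι) {f : ι → R} (hf : ∀ i ∈ s, f i ≤ 1) :
    ∑ i ∈ s, f i ≤ #s := by
  simpa using sum_le_sum hf

theorem Finset.sum_eq_card_iff_forall_eq_one (s : Finset ι) {f : ι → R}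
    (hf : ∀ i ∈ s, f i ≤ 1) : ∑ i ∈ s, f i = #s ↔ ∀ i ∈ s, f i = 1 := by
  simpa using sum_eq_sum_iff_of_le hf

end ZeroOneSums

theorem inequalities_iff_of_zero_or_one {κ x' x S : ℤ} (hx' : x' = 0 ∨ x' = 1)
    (hx : x = 0 ∨ x = 1) (hS₀ : 0 ≤ S) (hSκ : S ≤ κ) :
    ((κ + 1) * x' - κ * x - S + κ - 1 ≥ 0 ∧ -κ * x' + κ * x + S ≥ 0) ↔
      (x' = 1 ↔ (x = 1 ∨ S = κ)) := by
  rcases hx' with rfl | rfl <;> rcases hx with rfl | rfl <;> omega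

theorem stmt_13_general (κ : ℕ) (x' x : ℤ) (xs : Fin κ → ℤ)
    (hx' : x' = 0 ∨ x' = 1) (hx : x = 0 ∨ x = 1)
    (hxs : ∀ j, xs j = 0 ∨ xs j = 1) :
    (((κ : ℤ) + 1) * x' - (κ : ℤ) * x - (∑ j, xs j) + (κ : ℤ) - 1 ≥ 0 ∧
      -(κ : ℤ) * x' + (κ : ℤ) * x + ∑ j, xs j ≥ 0) ↔
      (x' = 1 ↔ (x = 1 ∨ ∀ j, xs j = 1)) := by
  have hnonneg : ∀ j ∈ univ, 0 ≤ xs j := fun j _ => by rcases hxs j with h | h <;> omega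
  have hle_one : ∀ j ∈ univ, xs j ≤ 1 := fun j _ => by rcases hxs j with h | h <;> omega
  have hall : (∀ j, xs j = 1) ↔ ∑ j, xs j = κ := by
    simpa using (sum_eq_card_iff_forall_eq_one univ hle_one).symm
  have hle_card : ∑ j, xs j ≤ κ := by simpa using sum_le_card_of_le_one univ hle_one
  rw [hall]
  exact inequalities_iff_of_zero_or_one hx' hx (sum_nonneg hnonneg) hle_card

theorem stmt_13 (κ : ℕ) (hκ : 1 ≤ κ) (x' x : ℤ) (xs : Fin κ → ℤ)
    (hx' : x' = 0 ∨ x' = 1) (hx : x = 0 ∨ x = 1)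
    (hxs : ∀ j, xs j = 0 ∨ xs j = 1) :
    (((κ : ℤ) + 1) * x' - (κ : ℤ) * x - (∑ j, xs j) + (κ : ℤ) - 1 ≥ 0 ∧
      -(κ : ℤ) * x' + (κ : ℤ) * x + ∑ j, xs j ≥ 0) ↔
      (x' = 1 ↔ (x = 1 ∨ ∀ j, xs j = 1)) :=
  stmt_13_general κ x' x xs hx' hx hxs
end

section
/- Elimination of a two-variable symmetric rule preserves the minimum: in a deduction system containing a symmetric rule [x_1, x_2] (x_1 known iff x_2 deducible and vice versa), identifying x_2 with x_1 and deleting the rule yields a system whose minimum number of initial propositions needed to deduce everything equals that of the original system. -/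
/-!
The symmetric rule makes `x₁` and `x₂` interderivable, so in the original system a proposition
is deducible exactly when its image under the substitution `x₂ ↦ x₁` is. Hence the substitution
maps deductions of the original system to deductions of the quotient (the rule `[x₁, x₂]`
becoming a trivial step `x₁ ⊢ x₁`), and every rule of the quotient is derivable in the original
system. A generating set of the quotient therefore generates the original system, and the image
of a generating set of the original system, which is no larger, generates the quotient.
-/

/-- Deduction closure of `S` under a rule set `R`. -/
inductive Closure {P : Type*} (R : Set (Set P × P)) (S : Set P) : P → Prop
  | mem {p} : p ∈ S → Closure R S p
  | rule {r} : r ∈ R → (∀ q ∈ r.1, Closure R S q) → Closure R S r.2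

theorem Nat.sInf_eq_sInf_of_forall_exists_le {A B : Set ℕ}
    (hAB : ∀ b ∈ B, ∃ a ∈ A, a ≤ b) (hBA : ∀ a ∈ A, ∃ b ∈ B, b ≤ a) : sInf A = sInf B := by
  rcases B.eq_empty_or_nonempty with rfl | hB
  · have hA : A = ∅ := Set.eq_empty_of_forall_notMem fun a ha => by
      obtain ⟨b, hb, -⟩ := hBA a ha
      exact hb
    rw [hA]
  · obtain ⟨a, ha, hab⟩ := hAB _ (Nat.sInf_mem hB)
    obtain ⟨b, hb, hba⟩ := hBA _ (Nat.sInf_mem ⟨a, ha⟩)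
    exact le_antisymm ((Nat.sInf_le ha).trans hab) ((Nat.sInf_le hb).trans hba)

section Closure

variable {P Q : Type*}

def mapRules (f : P → Q) (R : Set (Set P × P)) : Set (Set Q × Q) :=
  (fun r => (f '' r.1, f r.2)) '' R

theorem Closure.map {R : Set (Set P × P)} {R' : Set (Set Q × Q)} {S : Set P} (f : P → Q)
    (hR : ∀ r ∈ R, (f '' r.1, f r.2) ∈ R' ∨ f r.2 ∈ f '' r.1) {p : P} (h : Closure R S p) :
    Closure R' (f '' S) (f p) := by
  induction h with
  | mem hp => exact Closure.mem (Set.mem_image_of_mem f hp)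
  | @rule r hr _ ih =>
    rcases hR r hr with hmem | ⟨q, hq, hfq⟩
    · exact Closure.rule hmem (by rintro _ ⟨q, hq, rfl⟩; exact ih q hq)
    · exact hfq ▸ ih q hq

theorem Closure.of_mapRules {R R' : Set (Set P × P)} {S : Set P} {f : P → P} (hRR' : R ⊆ R')
    (hf : ∀ p, Closure R' S (f p) ↔ Closure R' S p) {p : P} (h : Closure (mapRules f R) S p) :
    Closure R' S p := by
  induction h with
  | mem hp => exact Closure.mem hp
  | rule hr _ ih =>
    obtain ⟨r, hr, rfl⟩ := hr
    exact (hf r.2).2 <| Closure.rule (hRR' hr) fun q hq => (hf q).1 (ih _ ⟨q, hq, rfl⟩)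

end Closure

section SymmetricRule

variable {P : Type*}

def symmRule (x₁ x₂ : P) : Set (Set P × P) := {({x₁}, x₂), ({x₂}, x₁)}

theorem closure_symmRule_left_iff {x₁ x₂ : P} {R : Set (Set P × P)} {S : Set P} :
    Closure (R ∪ symmRule x₁ x₂) S x₁ ↔ Closure (R ∪ symmRule x₁ x₂) S x₂ := by
  constructor <;> intro h
  · exact Closure.rule (r := ({x₁}, x₂)) (by simp [symmRule]) fun q hq => hq ▸ h
  · exact Closure.rule (r := ({x₂}, x₁)) (by simp [symmRule]) fun q hq => hq ▸ h

variable [DecidableEq P] (x₁ x₂ : P)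

def collapse (p : P) : P := if p = x₂ then x₁ else p

variable {x₁ x₂}

theorem collapse_left : collapse x₁ x₂ x₁ = x₁ := ite_self x₁

theorem collapse_right : collapse x₁ x₂ x₂ = x₁ := if_pos rfl

theorem collapse_of_ne {p : P} (hp : p ≠ x₂) : collapse x₁ x₂ p = p := if_neg hp

theorem collapse_ne (hne : x₁ ≠ x₂) (p : P) : collapse x₁ x₂ p ≠ x₂ := by
  unfold collapse; split_ifs with hp <;> assumption

theorem closure_symmRule_collapse_iff {R : Set (Set P × P)} {S : Set P} (p : P) :
    Closure (R ∪ symmRule x₁ x₂) S (collapse x₁ x₂ p) ↔ Closure (R ∪ symmRule x₁ x₂) S p := by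
  by_cases hp : p = x₂
  · rw [hp, collapse_right, closure_symmRule_left_iff]
  · rw [collapse_of_ne hp]

theorem Closure.collapse_of_symmRule {R : Set (Set P × P)} {S : Set P} {p : P}
    (h : Closure (R ∪ symmRule x₁ x₂) S p) :
    Closure (mapRules (collapse x₁ x₂) R) (collapse x₁ x₂ '' S) (collapse x₁ x₂ p) := by
  refine h.map _ fun r hr => ?_
  rcases hr with hr | hr
  · exact Or.inl ⟨r, hr, rfl⟩
  · right
    rcases hr with rfl | rfl <;> simp [collapse_left, collapse_right]

theorem Closure.of_collapse_of_symmRule {R : Set (Set P × P)} {S : Set P} {p : P}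
    (h : Closure (mapRules (collapse x₁ x₂) R) S p) : Closure (R ∪ symmRule x₁ x₂) S p :=
  h.of_mapRules Set.subset_union_left closure_symmRule_collapse_iff

end SymmetricRule

theorem stmt_15_general {P : Type*} [DecidableEq P] (x₁ x₂ : P) (hne : x₁ ≠ x₂)
    (R : Set (Set P × P)) :
    -- minimum of the original system, containing the symmetric rule [x₁, x₂]
    sInf {n : ℕ | ∃ S : Finset P, S.card = n ∧
        ∀ p, Closure (R ∪ {({x₁}, x₂), ({x₂}, x₁)}) ↑S p} =
    -- minimum of the quotient system: x₂ is identified with x₁ (substitution σ)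
    -- and removed, together with the rule [x₁, x₂]
    sInf {n : ℕ | ∃ S : Finset P, x₂ ∉ S ∧ S.card = n ∧
        ∀ p, p ≠ x₂ →
          Closure ((fun r : Set P × P =>
              ((fun p => if p = x₂ then x₁ else p) '' r.1,
                (fun p => if p = x₂ then x₁ else p) r.2)) '' R) ↑S p} := by
  change sInf {n | ∃ S : Finset P, S.card = n ∧ ∀ p, Closure (R ∪ symmRule x₁ x₂) ↑S p} =
    sInf {n | ∃ S : Finset P, x₂ ∉ S ∧ S.card = n ∧
      ∀ p, p ≠ x₂ → Closure (mapRules (collapse x₁ x₂) R) ↑S p}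
  apply Nat.sInf_eq_sInf_of_forall_exists_le
  · rintro _ ⟨S, -, rfl, hS⟩
    refine ⟨S.card, ⟨S, rfl, fun p => ?_⟩, le_rfl⟩
    exact (closure_symmRule_collapse_iff p).1
      (hS _ (collapse_ne hne p)).of_collapse_of_symmRule
  · rintro _ ⟨S, rfl, hS⟩
    refine ⟨_, ⟨S.image (collapse x₁ x₂), ?_, rfl, fun p hp => ?_⟩, Finset.card_image_le⟩
    · simpa using fun q _ => collapse_ne hne q
    · simpa [collapse_of_ne hp] using (hS p).collapse_of_symmRule

theorem stmt_15 {P : Type*} [Fintype P] [DecidableEq P] (x₁ x₂ : P) (hne : x₁ ≠ x₂)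
    (R : Set (Set P × P)) :
    -- minimum of the original system, containing the symmetric rule [x₁, x₂]
    sInf {n : ℕ | ∃ S : Finset P, S.card = n ∧
        ∀ p, Closure (R ∪ {({x₁}, x₂), ({x₂}, x₁)}) ↑S p} =
    -- minimum of the quotient system: x₂ is identified with x₁ (substitution σ)
    -- and removed, together with the rule [x₁, x₂]
    sInf {n : ℕ | ∃ S : Finset P, x₂ ∉ S ∧ S.card = n ∧
        ∀ p, p ≠ x₂ →
          Closure ((fun r : Set P × P =>
              ((fun p => if p = x₂ then x₁ else p) '' r.1,
                (fun p => if p = x₂ then x₁ else p) r.2)) '' R) ↑S p} :=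
  stmt_15_general x₁ x₂ hne R
end

section
/- The 9 variables R_4, ..., R_{12} determine the full SNOW 2.0 state: in the Boolean deduction system on variables s_0,...,s_{27}, R_0,...,R_{13} with symmetric rules [s_{t+16}, s_{t+11}, s_{t+2}, s_t] for 0 ≤ t ≤ 11, [s_{t+15}, R_{t+1}, R_t, s_t] for 0 ≤ t ≤ 12, and [R_{t+2}, s_{t+5}, R_t] for 0 ≤ t ≤ 11, the deduction closure of {R_4, R_5, R_6, R_7, R_8, R_9, R_{10}, R_{11}, R_{12}} contains every variable. -/
/-- Variables of the SNOW 2.0 deduction system with T = 13: LFSR cells `s t`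
(0 ≤ t ≤ 27) and FSM registers `R t` (0 ≤ t ≤ 13). -/
inductive VS
  | s : ℕ → VS
  | R : ℕ → VS

/-- Deduction closure: symmetric rules `[s_{t+16},s_{t+11},s_{t+2},s_t]` (t ≤ 11),
`[s_{t+15},R_{t+1},R_t,s_t]` (t ≤ 12) and `[R_{t+2},s_{t+5},R_t]` (t ≤ 11);
any one member is deducible from the remaining ones. -/
inductive DedS (S : Set VS) : VS → Prop
  | mem {v} : v ∈ S → DedS S v
  | ruleA (t : ℕ) (ht : t ≤ 11) (i : Fin 4)
      (h : ∀ j, j ≠ i → DedS S (![VS.s (t+16), VS.s (t+11), VS.s (t+2), VS.s t] j)) :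
      DedS S (![VS.s (t+16), VS.s (t+11), VS.s (t+2), VS.s t] i)
  | ruleB (t : ℕ) (ht : t ≤ 12) (i : Fin 4)
      (h : ∀ j, j ≠ i → DedS S (![VS.s (t+15), VS.R (t+1), VS.R t, VS.s t] j)) :
      DedS S (![VS.s (t+15), VS.R (t+1), VS.R t, VS.s t] i)
  | ruleC (t : ℕ) (ht : t ≤ 11) (i : Fin 3)
      (h : ∀ j, j ≠ i → DedS S (![VS.R (t+2), VS.s (t+5), VS.R t] j)) :
      DedS S (![VS.R (t+2), VS.s (t+5), VS.R t] i)

/-- The nine known registers R₄,…,R₁₂. -/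
def initS : Set VS := {v | ∃ t, 4 ≤ t ∧ t ≤ 12 ∧ v = VS.R t}

/-!
Firing every rule whose other members are already known never leaves the deduction closure.
Twelve rounds of this forward chaining, started from `R₄, …, R₁₂`, reach all 42 variables, which
the kernel confirms by evaluation; the first round, for instance, reads off `s₉, …, s₁₅` from
`[R_{t+2}, s_{t+5}, R_t]`.
-/

instance : DecidableEq VS
  | .s a, .s b => decidable_of_iff (a = b) (by simp)
  | .R a, .R b => decidable_of_iff (a = b) (by simp)
  | .s _, .R _ => isFalse VS.noConfusion
  | .R _, .s _ => isFalse VS.noConfusion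

namespace DedS

variable {S : Set VS}

def rules : List (Σ n, Fin n → VS) :=
  (List.range 12).map (fun t => ⟨4, ![VS.s (t+16), VS.s (t+11), VS.s (t+2), VS.s t]⟩) ++
  (List.range 13).map (fun t => ⟨4, ![VS.s (t+15), VS.R (t+1), VS.R t, VS.s t]⟩) ++
  (List.range 12).map (fun t => ⟨3, ![VS.R (t+2), VS.s (t+5), VS.R t]⟩)

theorem of_mem_rules {r : Σ n, Fin n → VS} (hr : r ∈ rules) (i : Fin r.1)
    (h : ∀ j, j ≠ i → DedS S (r.2 j)) : DedS S (r.2 i) := by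
  simp only [rules, List.mem_append, List.mem_map, List.mem_range] at hr
  rcases hr with (⟨t, ht, rfl⟩ | ⟨t, ht, rfl⟩) | ⟨t, ht, rfl⟩
  · exact ruleA t (by omega) i h
  · exact ruleB t (by omega) i h
  · exact ruleC t (by omega) i h

def deduceStep (K : List VS) : List VS :=
  K ++ rules.flatMap fun r =>
    ((List.finRange r.1).filter fun i => ∀ j, j ≠ i → r.2 j ∈ K).map r.2

theorem of_mem_deduceStep {K : List VS} (hK : ∀ v ∈ K, DedS S v) :
    ∀ v ∈ deduceStep K, DedS S v := by
  simp only [deduceStep, List.mem_append, List.mem_flatMap, List.mem_map, List.mem_filter,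
    List.mem_finRange, true_and, decide_eq_true_eq]
  rintro v (hv | ⟨r, hr, i, hi, rfl⟩)
  · exact hK v hv
  · exact of_mem_rules hr i fun j hj => hK _ (hi j hj)

theorem of_mem_iterate_deduceStep {K : List VS} (hK : ∀ v ∈ K, DedS S v) (n : ℕ) :
    ∀ v ∈ deduceStep^[n] K, DedS S v := by
  induction n with
  | zero => exact hK
  | succ n ih => exact Function.iterate_succ_apply' deduceStep n K ▸ of_mem_deduceStep ih

end DedS

theorem stmt_17 :
    (∀ t ≤ 27, DedS initS (VS.s t)) ∧ (∀ t ≤ 13, DedS initS (VS.R t)) := by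
  have known : ∀ v ∈ DedS.deduceStep^[12] ((List.range' 4 9).map VS.R), DedS initS v := by
    refine DedS.of_mem_iterate_deduceStep (fun v hv => DedS.mem ?_) 12
    obtain ⟨t, ht, rfl⟩ := List.mem_map.mp hv
    rw [List.mem_range'_1] at ht
    exact ⟨t, by omega, by omega, rfl⟩
  refine ⟨fun t ht => known _ ?_, fun t ht => known _ ?_⟩ <;> revert t ht <;> decide +kernel
end
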